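/- arXiv:1702.00980 — 2 statements merged into one kernel-verified Lean document; each statement's English description precedes it below -/
import Mathlib

section
/- Over the max-plus semiring, for all n×n matrices A, B over ℝ_max one has per(A⊙B) ≥ per(A) + per(B) (tropical product of permanents, with −∞ absorbing), and equality per(A⊙B) = per(A) + per(B) holds whenever A or B is invertible (i.e. a monomial matrix). -/
open Matrix

noncomputable section

/-- The max-plus semiring `ℝ_max = ℝ ∪ {−∞}`: addition is `max` (the lattice `⊔`),
multiplication is `+` with `⊥ = −∞` absorbing. -/
abbrev Rmax : Type := WithBot ℝ

/-- Tropical matrix product: `(A ⊙ B) i j = max_t (A i t + B t j)`. -/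
def tropMul {l m p : Type*} [Fintype m] (A : Matrix l m Rmax) (B : Matrix m p Rmax) :
    Matrix l p Rmax :=
  Matrix.of fun i j => Finset.univ.sup fun t => A i t + B t j

/-- The tropical identity matrix: `0` on the diagonal, `−∞` elsewhere. -/
def tropId (m : Type*) [DecidableEq m] : Matrix m m Rmax :=
  Matrix.of fun i j => if i = j then (0 : Rmax) else ⊥

/-- Tropical permanent: maximum over permutations of the sum of the selected entries. -/
def tropPer {m : Type*} [Fintype m] [DecidableEq m] (A : Matrix m m Rmax) : Rmax :=
  Finset.univ.sup fun σ : Equiv.Perm m => ∑ i, A i (σ i)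

/-- Tropical trace: maximum of the diagonal entries. -/
def tropTrace {m : Type*} [Fintype m] (A : Matrix m m Rmax) : Rmax :=
  Finset.univ.sup fun i => A i i

/-- The type of `k`-element subsets of `{1,…,n}`. -/
abbrev KSub (n k : ℕ) : Type := {I : Finset (Fin n) // I.card = k}

/-- The `k`-th compound matrix: indexed by `k`-element subsets; the `(I,J)` entry is the
maximum over bijections `σ : I → J` of `∑_{i ∈ I} A i (σ i)`. -/
def compound {n : ℕ} (k : ℕ) (A : Matrix (Fin n) (Fin n) Rmax) :
    Matrix (KSub n k) (KSub n k) Rmax :=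
  Matrix.of fun I J =>
    Finset.univ.sup fun σ : {x // x ∈ I.1} ≃ {x // x ∈ J.1} =>
      ∑ i : {x // x ∈ I.1}, A i.1 (σ i).1

/-- Tropical adjoint: `adj(A) i j = per(A_{(j,i)})`, deleting row `j` and column `i`. -/
def tropAdj {n : ℕ} (A : Matrix (Fin (n+1)) (Fin (n+1)) Rmax) :
    Matrix (Fin (n+1)) (Fin (n+1)) Rmax :=
  Matrix.of fun i j => tropPer (A.submatrix j.succAbove i.succAbove)

/-- Quasi-inverse `A^∇` of a nonsingular matrix: `(A^∇) i j = adj(A) i j − per(A)`. -/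
def tropQInv {n : ℕ} (A : Matrix (Fin (n+1)) (Fin (n+1)) Rmax) :
    Matrix (Fin (n+1)) (Fin (n+1)) Rmax :=
  Matrix.of fun i j => tropAdj A i j + ((- (WithBot.unbotD 0 (tropPer A)) : ℝ) : Rmax)

/-- A matrix over `ℝ_max` is invertible iff it is a monomial (generalized permutation) matrix. -/
def IsMonomial {n : ℕ} (A : Matrix (Fin n) (Fin n) Rmax) : Prop :=
  ∃ (π : Equiv.Perm (Fin n)) (d : Fin n → ℝ),
    ∀ i j, A i j = if j = π i then ((d i : ℝ) : Rmax) else ⊥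

/-- `m`-fold tropical power of a square matrix (`A^{⊙0}` is the tropical identity). -/
def tropPow {m : Type*} [Fintype m] [DecidableEq m] (A : Matrix m m Rmax) : ℕ → Matrix m m Rmax
  | 0 => tropId m
  | k + 1 => tropMul (tropPow A k) A

/-! If `σ` and `τ` are optimal permutations for `A` and `B`, then along `τ ∘ σ` every entry of
`A ⊙ B` is at least `A i (σ i) + B (σ i) (τ (σ i))`, which gives the inequality. If `A` is
monomial, `A i (π i) = d i`, then `(A ⊙ B) i j = d i + B (π i) j` exactly, so every permutation
sum of `A ⊙ B` is `per A` plus a permutation sum of `B` with its rows permuted by `π`, hence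
at most `per A + per B`; the case of a monomial `B` is symmetric. -/

open Finset Equiv

theorem add_le_tropMul {l m p : Type*} [Fintype m] (A : Matrix l m Rmax) (B : Matrix m p Rmax)
    (i : l) (t : m) (j : p) : A i t + B t j ≤ tropMul A B i j :=
  le_sup (f := fun t => A i t + B t j) (mem_univ t)

section

variable {m : Type*} [Fintype m] [DecidableEq m]

theorem sum_le_tropPer (A : Matrix m m Rmax) (σ : Perm m) : ∑ i, A i (σ i) ≤ tropPer A :=
  le_sup (f := fun σ : Perm m => ∑ i, A i (σ i)) (mem_univ σ)

theorem sum_perm_le_tropPer (A : Matrix m m Rmax) (π σ : Perm m) :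
    ∑ i, A (π i) (σ i) ≤ tropPer A :=
  calc ∑ i, A (π i) (σ i) = ∑ i, A (π i) ((π.symm.trans σ) (π i)) := by simp
    _ = ∑ j, A j ((π.symm.trans σ) j) := Equiv.sum_comp π fun j => A j ((π.symm.trans σ) j)
    _ ≤ tropPer A := sum_le_tropPer A _

theorem tropPer_le_iff {A : Matrix m m Rmax} {x : Rmax} :
    tropPer A ≤ x ↔ ∀ σ : Perm m, ∑ i, A i (σ i) ≤ x := by
  simp [tropPer]

theorem exists_tropPer_eq_sum (A : Matrix m m Rmax) :
    ∃ σ : Perm m, tropPer A = ∑ i, A i (σ i) :=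
  let ⟨σ, _, hσ⟩ := exists_mem_eq_sup univ univ_nonempty fun σ : Perm m => ∑ i, A i (σ i)
  ⟨σ, hσ⟩

theorem tropPer_add_tropPer_le_tropPer_tropMul (A B : Matrix m m Rmax) :
    tropPer A + tropPer B ≤ tropPer (tropMul A B) := by
  obtain ⟨σ, hσ⟩ := exists_tropPer_eq_sum A
  obtain ⟨τ, hτ⟩ := exists_tropPer_eq_sum B
  calc tropPer A + tropPer B = ∑ i, (A i (σ i) + B (σ i) (τ (σ i))) := by
        rw [hσ, hτ, sum_add_distrib, Equiv.sum_comp σ fun j => B j (τ j)]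
    _ ≤ ∑ i, tropMul A B i ((σ.trans τ) i) := sum_le_sum fun i _ => add_le_tropMul A B i _ _
    _ ≤ tropPer (tropMul A B) := sum_le_tropPer _ _

section Monomial

variable {π : Perm m} {d : m → ℝ}

theorem tropPer_eq_sum_of_monomial {A : Matrix m m Rmax}
    (hA : ∀ i j, A i j = if j = π i then (d i : Rmax) else ⊥) :
    tropPer A = ∑ i, (d i : Rmax) := by
  refine le_antisymm (tropPer_le_iff.2 fun σ => sum_le_sum fun i _ => ?_) ?_
  · rw [hA]
    split_ifs <;> simp
  · simpa [hA] using sum_le_tropPer A π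

theorem tropMul_apply_of_monomial_left {p : Type*} {A : Matrix m m Rmax}
    (hA : ∀ i j, A i j = if j = π i then (d i : Rmax) else ⊥) (B : Matrix m p Rmax)
    (i : m) (j : p) : tropMul A B i j = d i + B (π i) j := by
  refine le_antisymm (Finset.sup_le fun t _ => ?_)
    (by simpa [hA] using add_le_tropMul A B i (π i) j)
  rw [hA]
  split_ifs with ht <;> simp [ht]

theorem tropMul_apply_of_monomial_right {l : Type*} (A : Matrix l m Rmax) {B : Matrix m m Rmax}
    (hB : ∀ i j, B i j = if j = π i then (d i : Rmax) else ⊥) (i : l) (j : m) :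
    tropMul A B i j = A i (π.symm j) + d (π.symm j) := by
  refine le_antisymm (Finset.sup_le fun t _ => ?_)
    (by simpa [hB] using add_le_tropMul A B i (π.symm j) j)
  rw [hB]
  split_ifs with ht <;> simp [ht]

theorem tropPer_tropMul_of_monomial_left {A : Matrix m m Rmax}
    (hA : ∀ i j, A i j = if j = π i then (d i : Rmax) else ⊥) (B : Matrix m m Rmax) :
    tropPer (tropMul A B) = tropPer A + tropPer B := by
  refine le_antisymm (tropPer_le_iff.2 fun σ => ?_) (tropPer_add_tropPer_le_tropPer_tropMul A B)
  calc ∑ i, tropMul A B i (σ i) = ∑ i, (d i : Rmax) + ∑ i, B (π i) (σ i) := by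
        simp only [tropMul_apply_of_monomial_left hA, sum_add_distrib]
    _ ≤ tropPer A + tropPer B :=
        add_le_add (tropPer_eq_sum_of_monomial hA).ge (sum_perm_le_tropPer B π σ)

theorem tropPer_tropMul_of_monomial_right (A : Matrix m m Rmax) {B : Matrix m m Rmax}
    (hB : ∀ i j, B i j = if j = π i then (d i : Rmax) else ⊥) :
    tropPer (tropMul A B) = tropPer A + tropPer B := by
  refine le_antisymm (tropPer_le_iff.2 fun σ => ?_) (tropPer_add_tropPer_le_tropPer_tropMul A B)
  calc ∑ i, tropMul A B i (σ i)
        = ∑ i, A i ((σ.trans π.symm) i) + ∑ i, (d ((σ.trans π.symm) i) : Rmax) := by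
        simp only [tropMul_apply_of_monomial_right A hB, sum_add_distrib, Equiv.trans_apply]
    _ ≤ tropPer A + tropPer B := by
        rw [(σ.trans π.symm).sum_comp fun j => (d j : Rmax)]
        exact add_le_add (sum_le_tropPer A _) (tropPer_eq_sum_of_monomial hB).ge

end Monomial

end

/-- `per(A⊙B) ≥ per(A) + per(B)`, with equality when `A` or `B`
is invertible (monomial). -/
theorem tropPer_mul_ge_add {n : ℕ} (A B : Matrix (Fin n) (Fin n) Rmax) :
    tropPer A + tropPer B ≤ tropPer (tropMul A B) ∧
      ((IsMonomial A ∨ IsMonomial B) →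
        tropPer (tropMul A B) = tropPer A + tropPer B) := by
  refine ⟨tropPer_add_tropPer_le_tropPer_tropMul A B, ?_⟩
  rintro (⟨π, d, hA⟩ | ⟨π, d, hB⟩)
  · exact tropPer_tropMul_of_monomial_left hA B
  · exact tropPer_tropMul_of_monomial_right A hB
end
end

section
/- Over the max-plus semiring, if A is a nonsingular n×n matrix over ℝ_max (per(A) > −∞), then the matrices 𝓘_A = A ⊙ A^∇ and 𝓘'_A = A^∇ ⊙ A satisfy: all of their diagonal entries equal 0, they dominate the tropical identity matrix entrywise (𝓘_A ≥ I and 𝓘'_A ≥ I), and per(𝓘_A) = per(𝓘'_A) = 0. -/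
open Matrix

noncomputable section

/-! Let `p = per A`. Expanding the permanent along row `j` gives the tropical Cramer identity
`(A ⊙ adj A) i j = per (A with row j replaced by row i)`, so the diagonal of `A ⊙ A^∇` is
`p - p = 0`, which also gives `A ⊙ A^∇ ≥ I` and `per (A ⊙ A^∇) ≥ 0`.

For the reverse bound fix `σ`. The matrices `A` with row `σ i` replaced by row `i`, over all `i`,
use every row of `A` exactly `n + 1` times in total. Choosing an optimal permutation for each of
them produces an `(n + 1)`-regular bipartite multigraph of entries of `A`, which splits into
`n + 1` perfect matchings (König's theorem, a consequence of Birkhoff's theorem). Hence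
`∑ i, (A ⊙ adj A) i (σ i) ≤ (n + 1) p`, i.e. `per (A ⊙ A^∇) ≤ 0`.
The statements about `A^∇ ⊙ A` follow by transposition. -/

open Finset

namespace Rmax

lemma sup_add {ι : Type*} (s : Finset ι) (f : ι → Rmax) (c : Rmax) :
    s.sup f + c = s.sup fun i => f i + c :=
  apply_sup_eq_sup_comp_of_linearOrder (· + c) (fun _ _ h => add_le_add_left h c)
    (WithBot.bot_add c)

lemma add_sup {ι : Type*} (s : Finset ι) (f : ι → Rmax) (c : Rmax) :
    c + s.sup f = s.sup fun i => c + f i := by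
  simpa only [add_comm c] using sup_add s f c

end Rmax

lemma exists_perm_forall_ne_zero {m : Type*} [Fintype m] [DecidableEq m] (F : Matrix m m ℕ)
    {r : ℕ} (hr : 0 < r) (hrow : ∀ a, ∑ b, F a b = r) (hcol : ∀ b, ∑ a, F a b = r) :
    ∃ σ : Equiv.Perm m, ∀ a, F a (σ a) ≠ 0 := by
  -- `F / r` is doubly stochastic; a permutation with positive Birkhoff weight lies in the
  -- support of `F`.
  obtain ⟨M, hM, hFM⟩ := (exists_mem_doublyStochastic_eq_smul_iff (M := F.map ((↑) : ℕ → ℚ))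
    (Nat.cast_nonneg r)).2 ⟨fun _ _ => Nat.cast_nonneg _,
      fun a => by simp [← Nat.cast_sum, hrow], fun b => by simp [← Nat.cast_sum, hcol]⟩
  obtain ⟨w, hw0, hw1, hwM⟩ := exists_eq_sum_perm_of_mem_doublyStochastic hM
  obtain ⟨σ, hσ⟩ : ∃ σ, w σ ≠ 0 := by
    by_contra! h
    simp [h] at hw1
  refine ⟨σ, fun a ha => ?_⟩
  have hpos : 0 < M a (σ a) := by
    have hP : ∀ τ : Equiv.Perm m, 0 ≤ τ.permMatrix ℚ a (σ a) := fun τ =>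
      nonneg_of_mem_doublyStochastic permMatrix_mem_doublyStochastic
    calc (0 : ℚ) < w σ := (hw0 σ).lt_of_ne' hσ
      _ = w σ • σ.permMatrix ℚ a (σ a) := by simp [Equiv.Perm.permMatrix, PEquiv.toMatrix_apply]
      _ ≤ ∑ τ, w τ • τ.permMatrix ℚ a (σ a) :=
        single_le_sum (f := fun τ => w τ • τ.permMatrix ℚ a (σ a))
          (fun τ _ => mul_nonneg (hw0 τ) (hP τ)) (mem_univ σ)
      _ = M a (σ a) := by simp [← hwM, Matrix.sum_apply]
  have := congr_fun₂ hFM a (σ a)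
  simp only [map_apply, ha, Nat.cast_zero, Matrix.smul_apply, smul_eq_mul, zero_eq_mul,
    Nat.cast_eq_zero] at this
  exact this.elim hr.ne' hpos.ne'

lemma updateRow_eq_submatrix {m n' α : Type*} [DecidableEq m] (A : Matrix m n' α) (i j : m) :
    A.updateRow j (A i) = A.submatrix (Function.update id j i) id := by
  ext c b
  by_cases h : c = j
  · subst h; simp
  · simp [h]

lemma tropId_le_of_diag_eq_zero {m : Type*} [DecidableEq m] {M : Matrix m m Rmax}
    (h : ∀ i, M i i = 0) (i j : m) : tropId m i j ≤ M i j := by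
  by_cases hij : i = j
  · subst hij; simp [tropId, h]
  · simp [tropId, hij]

section Multiplication

variable {l m p : Type*} [Fintype m]

lemma tropMul_add_const_right (A : Matrix l m Rmax) (B : Matrix m p Rmax) (c : Rmax) (i : l)
    (j : p) : tropMul A (Matrix.of fun t j => B t j + c) i j = tropMul A B i j + c := by
  simp only [tropMul, of_apply, Rmax.sup_add, add_assoc]

lemma tropMul_transpose (A : Matrix l m Rmax) (B : Matrix m p Rmax) :
    (tropMul A B)ᵀ = tropMul Bᵀ Aᵀ := by
  ext i j
  simp only [tropMul, transpose_apply, of_apply, add_comm]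

end Multiplication

section Permanent

variable {m : Type*} [Fintype m] [DecidableEq m]

lemma le_tropPer (A : Matrix m m Rmax) (σ : Equiv.Perm m) : ∑ i, A i (σ i) ≤ tropPer A :=
  le_sup (f := fun σ : Equiv.Perm m => ∑ i, A i (σ i)) (mem_univ σ)

lemma exists_tropPer_eq (A : Matrix m m Rmax) :
    ∃ σ : Equiv.Perm m, tropPer A = ∑ i, A i (σ i) := by
  obtain ⟨σ, -, h⟩ := univ.exists_mem_eq_sup univ_nonempty fun σ : Equiv.Perm m => ∑ i, A i (σ i)
  exact ⟨σ, h⟩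

lemma tropPer_add_const (M : Matrix m m Rmax) (c : Rmax) :
    tropPer (Matrix.of fun i j => M i j + c) = tropPer M + Fintype.card m • c := by
  simp only [tropPer, Rmax.sup_add, of_apply, sum_add_distrib, sum_const, card_univ]

lemma tropPer_transpose (A : Matrix m m Rmax) : tropPer Aᵀ = tropPer A := by
  suffices h : ∀ B : Matrix m m Rmax, tropPer Bᵀ ≤ tropPer B from
    le_antisymm (h A) (by simpa using h Aᵀ)
  intro B
  refine Finset.sup_le fun σ _ => ?_
  calc ∑ i, Bᵀ i (σ i) = ∑ i, B (σ i) (σ⁻¹ (σ i)) := by simp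
    _ = ∑ i, B i (σ⁻¹ i) := Equiv.sum_comp σ fun i => B i (σ⁻¹ i)
    _ ≤ tropPer B := le_tropPer B σ⁻¹

lemma zero_le_tropPer_of_diag_eq_zero {M : Matrix m m Rmax} (h : ∀ i, M i i = 0) :
    0 ≤ tropPer M := by
  simpa [h] using le_tropPer M 1

lemma sum_nsmul_le_nsmul_tropPer (A : Matrix m m Rmax) (r : ℕ) (F : Matrix m m ℕ)
    (hrow : ∀ a, ∑ b, F a b = r) (hcol : ∀ b, ∑ a, F a b = r) :
    ∑ a, ∑ b, F a b • A a b ≤ r • tropPer A := by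
  induction r generalizing F with
  | zero =>
    have hF : F = 0 := by
      ext a b
      exact sum_eq_zero_iff.mp (hrow a) b (mem_univ b)
    simp [hF]
  | succ r ih =>
    obtain ⟨σ, hσ⟩ := exists_perm_forall_ne_zero F r.succ_pos hrow hcol
    set P := σ.permMatrix ℕ
    have hP : ∀ a b, P a b = if σ a = b then 1 else 0 := by
      simp [P, Equiv.Perm.permMatrix, PEquiv.toMatrix_apply]
    have hFP : F = (F - P) + P := by
      ext a b
      simp only [Matrix.add_apply, Matrix.sub_apply, hP]
      split_ifs with h
      · subst h; have := hσ a; omega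
      · simp
    have hrowP : ∀ a, ∑ b, P a b = 1 :=
      sum_row_of_mem_doublyStochastic permMatrix_mem_doublyStochastic
    have hcolP : ∀ b, ∑ a, P a b = 1 :=
      sum_col_of_mem_doublyStochastic permMatrix_mem_doublyStochastic
    have hrow' : ∀ a, ∑ b, (F - P) a b = r := fun a => by
      have := hrow a
      rw [hFP] at this
      simpa [sum_add_distrib, hrowP] using this
    have hcol' : ∀ b, ∑ a, (F - P) a b = r := fun b => by
      have := hcol b
      rw [hFP] at this
      simpa [sum_add_distrib, hcolP] using this
    calc ∑ a, ∑ b, F a b • A a b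
        = ∑ a, ∑ b, (F - P) a b • A a b + ∑ a, A a (σ a) := by
          conv_lhs => rw [hFP]
          simp [add_smul, sum_add_distrib, hP]
      _ ≤ r • tropPer A + tropPer A := add_le_add (ih (F - P) hrow' hcol') (le_tropPer A σ)
      _ = (r + 1) • tropPer A := (succ_nsmul _ _).symm

lemma sum_tropPer_submatrix_le {ι : Type*} [Fintype ι] (A : Matrix m m Rmax) (f : ι → m → m)
    (hf : ∀ a, ∑ k, #{c | f k c = a} = Fintype.card ι) :
    ∑ k, tropPer (A.submatrix (f k) id) ≤ Fintype.card ι • tropPer A := by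
  choose τ hτ using fun k => exists_tropPer_eq (A.submatrix (f k) id)
  let F : Matrix m m ℕ := fun a b => ∑ k, ∑ c, if f k c = a ∧ τ k c = b then 1 else 0
  have hrow : ∀ a, ∑ b, F a b = Fintype.card ι := fun a => by
    simp only [F, ← hf a, card_filter]
    rw [Finset.sum_comm]
    refine sum_congr rfl fun k _ => ?_
    rw [Finset.sum_comm]
    simp [ite_and]
  have hcol : ∀ b, ∑ a, F a b = Fintype.card ι := fun b => by
    have hτb : ∀ k, ∑ c, (if τ k c = b then 1 else 0) = 1 := fun k => by
      rw [← Equiv.sum_comp (τ k).symm]; simp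
    calc ∑ a, F a b = ∑ k, ∑ c, if τ k c = b then 1 else 0 := by
          simp only [F]
          rw [Finset.sum_comm]
          refine sum_congr rfl fun k _ => ?_
          rw [Finset.sum_comm]
          simp [ite_and]
      _ = Fintype.card ι := by simp [hτb]
  calc ∑ k, tropPer (A.submatrix (f k) id) = ∑ k, ∑ c, A (f k c) (τ k c) :=
        sum_congr rfl fun k _ => hτ k
    _ = ∑ k, ∑ c, ∑ a, ∑ b, if f k c = a ∧ τ k c = b then A a b else 0 := by simp [ite_and]
    _ = ∑ k, ∑ a, ∑ b, ∑ c, if f k c = a ∧ τ k c = b then A a b else 0 := by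
        refine sum_congr rfl fun k _ => ?_
        rw [Finset.sum_comm]
        exact sum_congr rfl fun a _ => Finset.sum_comm
    _ = ∑ a, ∑ b, ∑ k, ∑ c, if f k c = a ∧ τ k c = b then A a b else 0 := by
        rw [Finset.sum_comm]
        exact sum_congr rfl fun a _ => Finset.sum_comm
    _ = ∑ a, ∑ b, F a b • A a b := by simp only [F, Finset.sum_smul, ite_smul, one_smul, zero_smul]
    _ ≤ Fintype.card ι • tropPer A := sum_nsmul_le_nsmul_tropPer A _ F hrow hcol

lemma tropPer_of_tropPer_updateRow_le (A : Matrix m m Rmax) :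
    tropPer (Matrix.of fun i j => tropPer (A.updateRow j (A i))) ≤ Fintype.card m • tropPer A := by
  refine Finset.sup_le fun σ _ => ?_
  simp only [of_apply, updateRow_eq_submatrix]
  refine sum_tropPer_submatrix_le A _ fun a => ?_
  have hcount : ∀ i, #{c | Function.update id (σ i) i c = a} =
      (if i = a then 1 else 0) + if a = σ i then 0 else 1 := fun i => by
    rw [card_filter, ← Function.comp_def (fun c => if c = a then 1 else 0), Function.comp_update,
      sum_update_of_mem (mem_univ (σ i))]
    simp [sum_ite_eq']
  rw [sum_congr rfl fun i _ => hcount i, sum_add_distrib,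
    ← Equiv.sum_comp σ (fun i => if i = a then 1 else 0), ← sum_add_distrib,
    Fintype.card_eq_sum_ones]
  refine sum_congr rfl fun i _ => ?_
  by_cases h : a = σ i <;> simp [h, eq_comm]

end Permanent

section Adjoint

variable {n : ℕ}

lemma exists_perm_apply_succAbove (σ : Equiv.Perm (Fin (n + 1))) (i : Fin (n + 1)) :
    ∃ ρ : Equiv.Perm (Fin n), ∀ k, σ (i.succAbove k) = (σ i).succAbove (ρ k) := by
  let e := ((finSuccEquiv' i).symm.trans σ).trans (finSuccEquiv' (σ i))
  refine ⟨Equiv.removeNone e, fun k => ?_⟩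
  obtain ⟨j, hj⟩ := Fin.exists_succAbove_eq (σ.injective.ne (Fin.succAbove_ne i k))
  have hek : e (some k) = some j := by simp [e, ← hj]
  rw [← hj, Option.some_inj.mp ((Equiv.removeNone_some e ⟨j, hek⟩).trans hek)]

lemma exists_perm_extend_succAbove (i t : Fin (n + 1)) (ρ : Equiv.Perm (Fin n)) :
    ∃ σ : Equiv.Perm (Fin (n + 1)), σ i = t ∧ ∀ k, σ (i.succAbove k) = t.succAbove (ρ k) :=
  ⟨(finSuccEquiv' i).trans ((Equiv.optionCongr ρ).trans (finSuccEquiv' t).symm), by simp,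
    fun k => by simp⟩

lemma tropPer_eq_sup_row (A : Matrix (Fin (n + 1)) (Fin (n + 1)) Rmax) (i : Fin (n + 1)) :
    tropPer A = univ.sup fun t => A i t + tropPer (A.submatrix i.succAbove t.succAbove) := by
  apply le_antisymm
  · refine Finset.sup_le fun σ _ => ?_
    obtain ⟨ρ, hρ⟩ := exists_perm_apply_succAbove σ i
    calc ∑ k, A k (σ k)
        = A i (σ i) + ∑ k, A.submatrix i.succAbove (σ i).succAbove k (ρ k) := by
          simp [Fin.sum_univ_succAbove _ i, hρ]
      _ ≤ A i (σ i) + tropPer (A.submatrix i.succAbove (σ i).succAbove) := by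
          grw [le_tropPer _ ρ]
      _ ≤ _ := le_sup (f := fun t => A i t + tropPer (A.submatrix i.succAbove t.succAbove))
          (mem_univ (σ i))
  · refine Finset.sup_le fun t _ => ?_
    conv_lhs => rw [tropPer, Rmax.add_sup]
    refine Finset.sup_le fun ρ _ => ?_
    obtain ⟨σ, hσi, hσ⟩ := exists_perm_extend_succAbove i t ρ
    calc A i t + ∑ k, A.submatrix i.succAbove t.succAbove k (ρ k) = ∑ k, A k (σ k) := by
          simp [Fin.sum_univ_succAbove _ i, hσi, hσ]
      _ ≤ tropPer A := le_tropPer A σ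

lemma tropMul_tropAdj_apply (A : Matrix (Fin (n + 1)) (Fin (n + 1)) Rmax) (i j : Fin (n + 1)) :
    tropMul A (tropAdj A) i j = tropPer (A.updateRow j (A i)) := by
  simp [tropPer_eq_sup_row _ j, tropMul, tropAdj, submatrix_updateRow_succAbove]

lemma tropMul_tropQInv_apply (A : Matrix (Fin (n + 1)) (Fin (n + 1)) Rmax) {p : ℝ}
    (hp : tropPer A = p) (i j : Fin (n + 1)) :
    tropMul A (tropQInv A) i j = tropPer (A.updateRow j (A i)) + ((-p : ℝ) : Rmax) := by
  rw [← tropMul_tropAdj_apply, ← tropMul_add_const_right]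
  simp [tropQInv, hp]

lemma tropMul_tropQInv_apply_self (A : Matrix (Fin (n + 1)) (Fin (n + 1)) Rmax) {p : ℝ}
    (hp : tropPer A = p) (i : Fin (n + 1)) : tropMul A (tropQInv A) i i = 0 := by
  rw [tropMul_tropQInv_apply A hp, updateRow_eq_self, hp, ← WithBot.coe_add, add_neg_cancel,
    WithBot.coe_zero]

lemma tropPer_tropMul_tropQInv (A : Matrix (Fin (n + 1)) (Fin (n + 1)) Rmax) {p : ℝ}
    (hp : tropPer A = p) : tropPer (tropMul A (tropQInv A)) = 0 := by
  refine le_antisymm ?_ (zero_le_tropPer_of_diag_eq_zero (tropMul_tropQInv_apply_self A hp))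
  set N := Fintype.card (Fin (n + 1))
  calc tropPer (tropMul A (tropQInv A))
      = tropPer (Matrix.of fun i j => tropPer (A.updateRow j (A i))) + N • ((-p : ℝ) : Rmax) := by
        rw [← tropPer_add_const]
        congr 1
        ext i j
        exact tropMul_tropQInv_apply A hp i j
    _ ≤ N • tropPer A + N • ((-p : ℝ) : Rmax) := by grw [tropPer_of_tropPer_updateRow_le A]
    _ = 0 := by
        rw [hp, ← nsmul_add, ← WithBot.coe_add, add_neg_cancel, WithBot.coe_zero, nsmul_zero]

lemma tropQInv_transpose (A : Matrix (Fin (n + 1)) (Fin (n + 1)) Rmax) :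
    tropQInv Aᵀ = (tropQInv A)ᵀ := by
  ext i j
  simp [tropQInv, tropAdj, ← transpose_submatrix, tropPer_transpose]

lemma tropMul_tropQInv_eq_transpose (A : Matrix (Fin (n + 1)) (Fin (n + 1)) Rmax) :
    tropMul (tropQInv A) A = (tropMul Aᵀ (tropQInv Aᵀ))ᵀ := by
  rw [tropQInv_transpose, tropMul_transpose, transpose_transpose, transpose_transpose]

end Adjoint

/-- for `A` nonsingular, `𝓘_A = A ⊙ A^∇` and `𝓘'_A = A^∇ ⊙ A` have
zero diagonal, dominate the tropical identity, and have tropical permanent `0`. -/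
theorem quasi_identity_props {n : ℕ} (A : Matrix (Fin (n+1)) (Fin (n+1)) Rmax)
    (hA : ⊥ < tropPer A) :
    (∀ i, tropMul A (tropQInv A) i i = 0) ∧
    (∀ i, tropMul (tropQInv A) A i i = 0) ∧
    (∀ i j, tropId (Fin (n+1)) i j ≤ tropMul A (tropQInv A) i j) ∧
    (∀ i j, tropId (Fin (n+1)) i j ≤ tropMul (tropQInv A) A i j) ∧
    tropPer (tropMul A (tropQInv A)) = 0 ∧
    tropPer (tropMul (tropQInv A) A) = 0 := by
  obtain ⟨p, hp⟩ := WithBot.ne_bot_iff_exists.mp hA.ne'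
  have hpT : tropPer Aᵀ = p := (tropPer_transpose A).trans hp.symm
  have diag : ∀ i, tropMul A (tropQInv A) i i = 0 := tropMul_tropQInv_apply_self A hp.symm
  have diag' : ∀ i, tropMul (tropQInv A) A i i = 0 := fun i => by
    rw [tropMul_tropQInv_eq_transpose]
    exact tropMul_tropQInv_apply_self Aᵀ hpT i
  refine ⟨diag, diag', tropId_le_of_diag_eq_zero diag, tropId_le_of_diag_eq_zero diag',
    tropPer_tropMul_tropQInv A hp.symm, ?_⟩
  rw [tropMul_tropQInv_eq_transpose, tropPer_transpose]
  exact tropPer_tropMul_tropQInv Aᵀ hpT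
end
end
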